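/- arXiv:1308.1815 — 2 statements merged into one kernel-verified Lean document; each statement's English description precedes it below -/
import Mathlib

section
/- Let n ≥ 1, let ρ: ℝ → [0,∞) be strict bowl-shaped and differentiable, and let τ: [0,1] → ℝ be continuous and strictly increasing. For 0 ≤ i ≤ n define G_i(u) = ∫₀¹ ρ(τ(u) − τ(t))·f_{T_i}(t) dt, and assume G_i is finite on [0,1] and attains its minimum on [0,1] at some point u_i* for every i. Then for every continuous cumulative distribution function F and every invariant estimator d(Y;t) = Σ_{i=0}^n u_i·1{Y_i ≤ t < Y_{i+1}} with 0 ≤ u_0 ≤ … ≤ u_n ≤ 1, one has E_F[∫_ℝ ρ(τ(d(Y;t)) − τ(F(t))) dF(t)] ≥ (1/(n+1))·Σ_{i=0}^n G_i(u_i*), and the estimator d*(Y;t) = Σ_{i=0}^n u_i*·1{Y_i ≤ t < Y_{i+1}} attains this bound for every continuous F (i.e., its risk is constant in F and equal to (1/(n+1))·Σ_{i=0}^n G_i(u_i*)). -/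
open MeasureTheory Set
open scoped ENNReal NNReal

noncomputable section

/-- Number of sample points `x j ≤ t`, as an element of `Fin (n+1)`.
Note `countLE x t = i` iff `Y_i ≤ t < Y_{i+1}` where `Y_1 ≤ … ≤ Y_n` are the
order statistics of `x` and `Y_0 = -∞`, `Y_{n+1} = +∞`. -/
def countLE {n : ℕ} (x : Fin n → ℝ) (t : ℝ) : Fin (n + 1) :=
  ⟨(Finset.univ.filter (fun j => x j ≤ t)).card,
    Nat.lt_succ_of_le ((Finset.card_filter_le _ _).trans (by simp))⟩

/-- The invariant estimator `d(Y;t) = Σ_{i=0}^n u_i · 1{Y_i ≤ t < Y_{i+1}}`. -/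
def invEst {n : ℕ} (u : Fin (n + 1) → ℝ) : (Fin n → ℝ) → ℝ → ℝ :=
  fun x t => u (countLE x t)

/-- The cumulative distribution function of `μ`. -/
def cdfOf (μ : Measure ℝ) (t : ℝ) : ℝ := (μ (Set.Iic t)).toReal

/-- Distribution of an i.i.d. sample of size `n` from `μ`. -/
def sampleMeasure (n : ℕ) (μ : Measure ℝ) : Measure (Fin n → ℝ) :=
  Measure.pi fun _ => μ

/-- `(n+1)·C(n,i)·t^i·(1−t)^{n−i}`, the `Beta(i+1, n−i+1)` density on `(0,1)`. -/
def betaDen (n i : ℕ) (t : ℝ) : ℝ :=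
  ((n : ℝ) + 1) * (n.choose i) * t ^ i * (1 - t) ^ (n - i)


/-- `ρ : ℝ → ℝ` is strict bowl-shaped and differentiable: differentiable,
`ρ(0) = 0`, `ρ′(z) < 0` for `z < 0` and `ρ′(z) > 0` for `z > 0`. -/
structure StrictBowlShaped (ρ : ℝ → ℝ) : Prop where
  nonneg : ∀ z, 0 ≤ ρ z
  diff : Differentiable ℝ ρ
  zero : ρ 0 = 0
  deriv_neg : ∀ z < (0 : ℝ), deriv ρ z < 0
  deriv_pos : ∀ z > (0 : ℝ), 0 < deriv ρ z

/-- The risk `E_F[∫ ρ(τ(d(Y;t)) − τ(F(t))) dF(t)]` (in `[0,∞]`) for real-valued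
nonnegative `ρ`. -/
def riskOf {n : ℕ} (μ : Measure ℝ) (ρ τ : ℝ → ℝ)
    (d : (Fin n → ℝ) → ℝ → ℝ) : ℝ≥0∞ :=
  ∫⁻ x, (∫⁻ t, ENNReal.ofReal (ρ (τ (d x t) - τ (cdfOf μ t))) ∂μ)
    ∂(sampleMeasure n μ)

/-- `G_i(v) = ∫₀¹ ρ(τ(v) − τ(t))·f_{T_i}(t) dt`. -/
def GFun (n : ℕ) (ρ τ : ℝ → ℝ) (i : Fin (n + 1)) (v : ℝ) : ℝ :=
  ∫ t in Set.Ioo (0 : ℝ) 1, ρ (τ v - τ t) * betaDen n i t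

/-! For fixed `t`, the number of sample points `≤ t` is binomial with parameters `n` and
`F(t)`, so by Tonelli the risk of `d(Y;t) = u_{#{j | X_j ≤ t}}` is
`∫ Σ_i ρ(τ(u_i) − τ(F(t))) C(n,i) F(t)^i (1 − F(t))^(n−i) dF(t)`. For continuous `F` the law
of `F(X)` is uniform on `[0,1]`, and `C(n,i) v^i (1 − v)^(n−i) = f_{T_i}(v) / (n+1)`, so this
risk equals `(1/(n+1)) Σ_i G_i(u_i)` whatever `F` is. Minimizing each `G_i` separately gives
the lower bound, attained by `u*`. -/

open Filter Topology ProbabilityTheory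

section BinomialCount

variable {α ι : Type*} [Fintype ι] [DecidableEq ι] {p : α → Prop}
  [DecidablePred p]

theorem setOf_filter_eq_pi (s : Finset ι) :
    {x : ι → α | Finset.univ.filter (fun j => p (x j)) = s} =
      Set.pi univ fun j => if j ∈ s then {a | p a} else {a | ¬ p a} := by
  ext x
  simp only [Finset.ext_iff, Finset.mem_filter, Finset.mem_univ, true_and,
    Set.mem_pi, mem_univ, forall_const]
  refine forall_congr' fun j => ?_
  split_ifs with hj <;> simp [hj]

theorem measure_pi_card_filter_eq [MeasurableSpace α] (μ : Measure α) [SigmaFinite μ]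
    (hp : MeasurableSet {a | p a}) (k : ℕ) :
    Measure.pi (fun _ : ι => μ) {x | (Finset.univ.filter fun j => p (x j)).card = k} =
      (Fintype.card ι).choose k * μ {a | p a} ^ k * μ {a | ¬ p a} ^ (Fintype.card ι - k) := by
  let N : (ι → α) → Finset ι := fun x => Finset.univ.filter fun j => p (x j)
  have hfiber : ∀ s,
      N ⁻¹' {s} = Set.pi univ fun j => if j ∈ s then {a | p a} else {a | ¬ p a} :=
    setOf_filter_eq_pi
  have hunion :
      {x | (N x).card = k} = ⋃ s ∈ Finset.powersetCard k Finset.univ, N ⁻¹' {s} := by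
    ext x; simp [Finset.mem_powersetCard]
  have hmeas : ∀ s, MeasurableSet (N ⁻¹' {s}) := fun s => by
    rw [hfiber]
    exact MeasurableSet.univ_pi fun j => by split_ifs; exacts [hp, hp.compl]
  have hterm : ∀ s ∈ Finset.powersetCard k Finset.univ,
      Measure.pi (fun _ : ι => μ) (N ⁻¹' {s}) =
        μ {a | p a} ^ k * μ {a | ¬ p a} ^ (Fintype.card ι - k) := by
    intro s hs
    rw [hfiber, Measure.pi_pi]
    simp [apply_ite μ, Finset.prod_ite, Finset.filter_notMem_eq_sdiff, Finset.card_univ_sdiff,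
      (Finset.mem_powersetCard.1 hs).2]
  change Measure.pi _ {x | (N x).card = k} = _
  rw [hunion, measure_biUnion_finset (pairwiseDisjoint_fiber N _) fun s _ => hmeas s,
    Finset.sum_congr rfl hterm, Finset.sum_const, Finset.card_powersetCard, Finset.card_univ,
    nsmul_eq_mul, mul_assoc]

end BinomialCount

theorem lintegral_comp_eq_sum_measure_preimage {α β : Type*} [MeasurableSpace α]
    [MeasurableSpace β] [Fintype β] [MeasurableSingletonClass β] {μ : Measure α} {f : α → β}
    (hf : Measurable f) (g : β → ℝ≥0∞) :
    ∫⁻ x, g (f x) ∂μ = ∑ b, g b * μ (f ⁻¹' {b}) := by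
  rw [← lintegral_map (measurable_of_finite g) hf, lintegral_fintype]
  simp_rw [Measure.map_apply hf (measurableSet_singleton _)]

section CDF

variable (μ : Measure ℝ) [IsProbabilityMeasure μ]

theorem cdfOf_eq_cdf : cdfOf μ = cdf μ := funext fun t => (cdf_eq_real μ t).symm

theorem measure_Ioi_eq_ofReal_one_sub_cdf (t : ℝ) :
    μ (Ioi t) = ENNReal.ofReal (1 - cdf μ t) := by
  rw [← (cdf μ).measure_Ioi (tendsto_cdf_atTop μ), measure_cdf]

variable {μ}

theorem measure_cdf_preimage_Iic (hF : Continuous (cdf μ)) {a : ℝ} (ha : a < 1) :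
    μ (cdf μ ⁻¹' Iic a) = ENNReal.ofReal a := by
  set S := cdf μ ⁻¹' Iic a
  rcases S.eq_empty_or_nonempty with hS | hS
  · have ha0 : a ≤ 0 := ge_of_tendsto (tendsto_cdf_atBot μ) <| Eventually.of_forall fun t =>
      (not_le.1 fun ht => (Set.eq_empty_iff_forall_notMem.1 hS t) ht).le
    rw [hS, measure_empty, ENNReal.ofReal_of_nonpos ha0]
  obtain ⟨M, hM⟩ := eventually_atTop.1 ((tendsto_cdf_atTop μ).eventually (lt_mem_nhds ha))
  have hbdd : BddAbove S := ⟨M, fun t ht => le_of_not_gt fun h => (hM t h.le).not_ge ht⟩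
  have hs : sSup S ∈ S := (isClosed_Iic.preimage hF).csSup_mem hS hbdd
  have hSeq : S = Iic (sSup S) :=
    Subset.antisymm (fun t => le_csSup hbdd) fun t ht => (monotone_cdf μ ht).trans hs
  -- just right of `sSup S` the cdf exceeds `a`, so by continuity it equals `a` there
  have hFs : cdf μ (sSup S) = a := by
    refine le_antisymm hs <| ge_of_tendsto
      ((hF.tendsto _).mono_left (nhdsWithin_le_nhds (s := Ioi (sSup S))))
      (eventually_nhdsWithin_of_forall fun t ht => ?_)
    exact (not_le.1 fun h => (not_le.2 ht) (le_csSup hbdd h)).le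
  rw [hSeq, ← ofReal_cdf, hFs]

theorem map_cdf_eq_restrict_Icc (hF : Continuous (cdf μ)) :
    μ.map (cdf μ) = volume.restrict (Icc 0 1) := by
  have : IsProbabilityMeasure (μ.map (cdf μ)) :=
    Measure.isProbabilityMeasure_map hF.aemeasurable
  refine Measure.ext_of_Iic _ _ fun a => ?_
  rw [Measure.map_apply hF.measurable measurableSet_Iic,
    Measure.restrict_apply measurableSet_Iic,
    show Iic a ∩ Icc 0 1 = Icc 0 (min a 1) by ext; simp; tauto, Real.volume_Icc]
  rcases lt_or_ge a 1 with ha | ha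
  · rw [measure_cdf_preimage_Iic hF ha, min_eq_left ha.le, sub_zero]
  · rw [min_eq_right ha, show cdf μ ⁻¹' Iic a = univ from
      eq_univ_of_forall fun t => (cdf_le_one μ t).trans ha]
    simp

theorem lintegral_comp_cdf (hF : Continuous (cdf μ)) {h : ℝ → ℝ≥0∞}
    (hh : AEMeasurable h (volume.restrict (Icc 0 1))) :
    ∫⁻ t, h (cdf μ t) ∂μ = ∫⁻ v in Icc 0 1, h v := by
  rw [← map_cdf_eq_restrict_Icc hF] at hh ⊢
  exact (lintegral_map' hh hF.aemeasurable).symm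

end CDF

section Sample

variable {n : ℕ}

instance (μ : Measure ℝ) [IsProbabilityMeasure μ] : IsProbabilityMeasure (sampleMeasure n μ) := by
  unfold sampleMeasure
  infer_instance

theorem measurable_countLE : Measurable fun p : (Fin n → ℝ) × ℝ => countLE p.1 p.2 := by
  refine measurable_to_countable' fun i => ?_
  have hcard : Measurable fun p : (Fin n → ℝ) × ℝ =>
      (Finset.univ.filter fun j => p.1 j ≤ p.2).card := by
    simp_rw [Finset.card_filter]
    exact Finset.measurable_sum _ fun j _ => Measurable.ite
      (measurableSet_le ((measurable_pi_apply j).comp measurable_fst) measurable_snd)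
      measurable_const measurable_const
  convert hcard (measurableSet_singleton (i : ℕ)) using 1
  ext p
  simp [countLE, Fin.ext_iff]

theorem sampleMeasure_countLE_eq (μ : Measure ℝ) [IsProbabilityMeasure μ] (t : ℝ)
    (i : Fin (n + 1)) :
    sampleMeasure n μ {x | countLE x t = i} =
      ENNReal.ofReal (n.choose i * cdf μ t ^ (i : ℕ) * (1 - cdf μ t) ^ (n - i)) := by
  have hcount : {x : Fin n → ℝ | countLE x t = i} =
      {x | (Finset.univ.filter fun j => x j ≤ t).card = i} := by
    ext x; simp [countLE, Fin.ext_iff]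
  have h0 := cdf_nonneg μ t
  have h1 := sub_nonneg.2 (cdf_le_one μ t)
  rw [sampleMeasure, hcount, measure_pi_card_filter_eq μ measurableSet_Iic, Fintype.card_fin,
    ENNReal.ofReal_mul (by positivity), ENNReal.ofReal_mul (by positivity),
    ENNReal.ofReal_natCast, ENNReal.ofReal_pow h0, ENNReal.ofReal_pow h1, ofReal_cdf,
    ← measure_Ioi_eq_ofReal_one_sub_cdf]
  simp only [not_le]
  rfl

end Sample

theorem betaDen_nonneg (n i : ℕ) {v : ℝ} (hv : v ∈ Icc (0 : ℝ) 1) : 0 ≤ betaDen n i v := by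
  have := sub_nonneg.2 hv.2
  have := hv.1
  unfold betaDen
  positivity

theorem choose_mul_pow_mul_pow_eq_betaDen_div (n i : ℕ) (v : ℝ) :
    n.choose i * v ^ i * (1 - v) ^ (n - i) = betaDen n i v / (n + 1) := by
  unfold betaDen
  field_simp

theorem lintegral_Icc_ofReal_mul_betaDen_div {n : ℕ} {i : Fin (n + 1)} {ρ τ : ℝ → ℝ}
    (hρ0 : ∀ z, 0 ≤ ρ z) {w : ℝ}
    (hint : IntegrableOn (fun t => ρ (τ w - τ t) * betaDen n i t) (Ioo 0 1)) :
    ∫⁻ v in Icc 0 1, ENNReal.ofReal (ρ (τ w - τ v) * (betaDen n i v / (n + 1))) =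
      ENNReal.ofReal (GFun n ρ τ i w / (n + 1)) := by
  rw [← restrict_Ioo_eq_restrict_Icc, GFun, ← integral_div,
    ofReal_integral_eq_lintegral_ofReal]
  · simp_rw [mul_div_assoc]
  · exact hint.div_const _
  · filter_upwards [ae_restrict_mem measurableSet_Ioo] with v hv
    exact div_nonneg (mul_nonneg (hρ0 _) (betaDen_nonneg n i (Ioo_subset_Icc_self hv)))
      (by positivity)

theorem riskOf_invEst {n : ℕ} (μ : Measure ℝ) [IsProbabilityMeasure μ]
    (hF : Continuous (cdfOf μ)) {ρ τ : ℝ → ℝ} (hρ0 : ∀ z, 0 ≤ ρ z) (hρ : Measurable ρ)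
    (hτ : ContinuousOn τ (Icc 0 1)) {u : Fin (n + 1) → ℝ}
    (hint : ∀ i, IntegrableOn (fun t => ρ (τ (u i) - τ t) * betaDen n i t) (Ioo 0 1)) :
    riskOf μ ρ τ (invEst u) =
      ENNReal.ofReal ((1 / ((n : ℝ) + 1)) * ∑ i, GFun n ρ τ i (u i)) := by
  rw [cdfOf_eq_cdf] at hF
  have hτF : Continuous fun t => τ (cdf μ t) :=
    hτ.comp_continuous hF fun t => ⟨cdf_nonneg μ t, cdf_le_one μ t⟩
  let g : Fin (n + 1) → ℝ → ℝ≥0∞ := fun i v =>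
    ENNReal.ofReal (ρ (τ (u i) - τ v) * (betaDen n i v / (n + 1)))
  have hg : ∀ i, AEMeasurable (g i) (volume.restrict (Icc 0 1)) := fun i =>
    ENNReal.measurable_ofReal.comp_aemeasurable <|
      (hρ.comp_aemeasurable (aemeasurable_const.sub (hτ.aemeasurable measurableSet_Icc))).mul
        (by unfold betaDen; fun_prop)
  calc riskOf μ ρ τ (invEst u)
      = ∫⁻ t, ∫⁻ x, ENNReal.ofReal (ρ (τ (u (countLE x t)) - τ (cdf μ t)))
          ∂sampleMeasure n μ ∂μ := by
        rw [riskOf, cdfOf_eq_cdf]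
        exact lintegral_lintegral_swap <| Measurable.aemeasurable <|
          ENNReal.measurable_ofReal.comp <| hρ.comp <|
            ((measurable_from_top (f := fun i => τ (u i))).comp measurable_countLE).sub
              (hτF.measurable.comp measurable_snd)
    _ = ∫⁻ t, ∑ i, g i (cdf μ t) ∂μ := by
        refine lintegral_congr fun t => (lintegral_comp_eq_sum_measure_preimage
          (measurable_countLE.comp (measurable_id.prodMk measurable_const))
          fun i => ENNReal.ofReal (ρ (τ (u i) - τ (cdf μ t)))).trans ?_
        refine Finset.sum_congr rfl fun i _ => ?_
        change _ * sampleMeasure n μ {x | countLE x t = i} = _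
        rw [sampleMeasure_countLE_eq, ← ENNReal.ofReal_mul (hρ0 _),
          choose_mul_pow_mul_pow_eq_betaDen_div]
    _ = ∑ i, ∫⁻ v in Icc 0 1, g i v := by
        refine (lintegral_comp_cdf hF (h := fun v => ∑ i, g i v)
          (Finset.aemeasurable_fun_sum _ fun i _ => hg i)).trans ?_
        exact lintegral_finsetSum' _ fun i _ => hg i
    _ = ∑ i, ENNReal.ofReal (GFun n ρ τ i (u i) / (n + 1)) :=
        Finset.sum_congr rfl fun i _ => lintegral_Icc_ofReal_mul_betaDen_div hρ0 (hint i)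
    _ = _ := by
        rw [← ENNReal.ofReal_sum_of_nonneg, ← Finset.sum_div, one_div_mul_eq_div]
        intro i _
        exact div_nonneg (setIntegral_nonneg measurableSet_Ioo fun v hv =>
          mul_nonneg (hρ0 _) (betaDen_nonneg n i (Ioo_subset_Icc_self hv))) (by positivity)

theorem best_invariant_estimator_general
    {n : ℕ}
    (ρ : ℝ → ℝ) (hρ : StrictBowlShaped ρ)
    (τ : ℝ → ℝ) (hτc : ContinuousOn τ (Set.Icc 0 1))
    (hGfin : ∀ (i : Fin (n + 1)), ∀ v ∈ Set.Icc (0 : ℝ) 1,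
      IntegrableOn (fun t => ρ (τ v - τ t) * betaDen n i t) (Set.Ioo 0 1) volume)
    (ustar : Fin (n + 1) → ℝ)
    (hustar : ∀ i : Fin (n + 1), ustar i ∈ Set.Icc (0 : ℝ) 1 ∧
      ∀ v ∈ Set.Icc (0 : ℝ) 1, GFun n ρ τ i (ustar i) ≤ GFun n ρ τ i v) :
    ∀ (μ : Measure ℝ), IsProbabilityMeasure μ → Continuous (cdfOf μ) →
      (∀ (u : Fin (n + 1) → ℝ), Monotone u → 0 ≤ u 0 → u (Fin.last n) ≤ 1 →
        ENNReal.ofReal ((1 / ((n : ℝ) + 1)) * ∑ i : Fin (n + 1), GFun n ρ τ i (ustar i)) ≤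
          riskOf μ ρ τ (invEst u)) ∧
      riskOf μ ρ τ (invEst ustar) =
        ENNReal.ofReal ((1 / ((n : ℝ) + 1)) * ∑ i : Fin (n + 1), GFun n ρ τ i (ustar i)) := by
  intro μ _ hF
  have hrisk : ∀ u : Fin (n + 1) → ℝ, (∀ i, u i ∈ Icc (0 : ℝ) 1) →
      riskOf μ ρ τ (invEst u) =
        ENNReal.ofReal ((1 / ((n : ℝ) + 1)) * ∑ i, GFun n ρ τ i (u i)) :=
    fun u hu => riskOf_invEst μ hF hρ.nonneg hρ.diff.continuous.measurable hτc
      fun i => hGfin i _ (hu i)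
  refine ⟨fun u hu hu0 hu1 => ?_, hrisk ustar fun i => (hustar i).1⟩
  have hu01 : ∀ i, u i ∈ Icc (0 : ℝ) 1 := fun i =>
    ⟨hu0.trans (hu (Fin.zero_le i)), (hu (Fin.le_last i)).trans hu1⟩
  rw [hrisk u hu01]
  gcongr with i
  exact (hustar i).2 _ (hu01 i)

/-- the best invariant estimator, with weights `u_i*` minimizing
`G_i` over `[0,1]`, has constant risk `(1/(n+1))·Σ_i G_i(u_i*)`, which is a
lower bound for the risk of any invariant estimator. -/
theorem best_invariant_estimator
    {n : ℕ} (hn : 1 ≤ n)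
    (ρ : ℝ → ℝ) (hρ : StrictBowlShaped ρ)
    (τ : ℝ → ℝ) (hτc : ContinuousOn τ (Set.Icc 0 1))
    (hτm : StrictMonoOn τ (Set.Icc 0 1))
    (hGfin : ∀ (i : Fin (n + 1)), ∀ v ∈ Set.Icc (0 : ℝ) 1,
      IntegrableOn (fun t => ρ (τ v - τ t) * betaDen n i t) (Set.Ioo 0 1) volume)
    (ustar : Fin (n + 1) → ℝ)
    (hustar : ∀ i : Fin (n + 1), ustar i ∈ Set.Icc (0 : ℝ) 1 ∧
      ∀ v ∈ Set.Icc (0 : ℝ) 1, GFun n ρ τ i (ustar i) ≤ GFun n ρ τ i v) :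
    ∀ (μ : Measure ℝ), IsProbabilityMeasure μ → Continuous (cdfOf μ) →
      (∀ (u : Fin (n + 1) → ℝ), Monotone u → 0 ≤ u 0 → u (Fin.last n) ≤ 1 →
        ENNReal.ofReal ((1 / ((n : ℝ) + 1)) * ∑ i : Fin (n + 1), GFun n ρ τ i (ustar i)) ≤
          riskOf μ ρ τ (invEst u)) ∧
      riskOf μ ρ τ (invEst ustar) =
        ENNReal.ofReal ((1 / ((n : ℝ) + 1)) * ∑ i : Fin (n + 1), GFun n ρ τ i (ustar i)) :=
  best_invariant_estimator_general ρ hρ τ hτc hGfin ustar hustar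

end
end

section
/- Let n ≥ 2 and 1 ≤ i ≤ n−1, and let f_{T_i}(t) = (n+1)·C(n,i)·t^i·(1−t)^{n−i} be the Beta(i+1, n−i+1) density on (0,1). Then t ↦ t/(1−t) is integrable with respect to f_{T_i}(t) dt on (0,1), and the function u ↦ ∫₀¹ |u/(1−u) − t/(1−t)|·f_{T_i}(t) dt on (0,1) attains its minimum uniquely at the median m_i of the Beta(i+1, n−i+1) distribution, i.e., at the unique m_i ∈ (0,1) with ∫₀^{m_i} f_{T_i}(t) dt = 1/2. -/
open MeasureTheory Set
open scoped ENNReal NNReal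

noncomputable section

/-! On `(0,1)` the density `betaDen n i` is Mathlib's `betaPDFReal (i+1) (n-i+1)`, so everything is
an integral against the probability measure `betaMeasure (i+1) (n-i+1)`. The odds `t / (1 - t)` are
integrable because for `i < n` the density carries a factor `1 - t` that cancels their pole.

Minimality of the median is the subgradient inequality `|b - y| ≥ |a - y| + (b - a) s(y)`, with
`s = 1` for `y ≤ a` and `s = -1` for `y > a`: if `μ(g ≤ a) = 1/2`, then `s ∘ g` has mean zero, so
integrating gives `∫ |b - g| ≥ ∫ |a - g|`, strictly as soon as `g` takes values strictly between
`a` and `b` with positive probability. The odds are strictly increasing, so the Beta mass of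
`{odds ≤ odds m}` is `∫₀^m f = 1/2`, and the points strictly between `u` and `m` form the required
set of positive mass. -/

open ProbabilityTheory

lemma sub_mul_ite_le_abs_sub_sub_abs_sub (a b y : ℝ) :
    (b - a) * (if y ≤ a then 1 else -1) ≤ |b - y| - |a - y| := by
  split_ifs with h
  · rw [abs_of_nonneg (sub_nonneg.2 h)]; linarith [le_abs_self (b - y)]
  · rw [abs_of_neg (sub_neg.2 (not_le.1 h))]; linarith [neg_abs_le (b - y)]

lemma sub_mul_ite_lt_abs_sub_sub_abs_sub {a b y : ℝ} (hy : y ∈ Ioo (min a b) (max a b)) :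
    (b - a) * (if y ≤ a then 1 else -1) < |b - y| - |a - y| := by
  rcases le_total a b with hab | hab
  · rw [min_eq_left hab, max_eq_right hab] at hy
    rw [if_neg hy.1.not_ge, abs_of_pos (sub_pos.2 hy.2), abs_of_neg (sub_neg.2 hy.1)]
    linarith [hy.2]
  · rw [min_eq_right hab, max_eq_left hab] at hy
    rw [if_pos hy.2.le, abs_of_neg (sub_neg.2 hy.1), abs_of_pos (sub_pos.2 hy.2)]
    linarith [hy.1]

theorem integral_abs_sub_lt_of_median {α : Type*} [MeasurableSpace α] {μ : Measure α}
    [IsProbabilityMeasure μ] {g : α → ℝ} (hg : Measurable g) (hgi : Integrable g μ) {a b : ℝ}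
    (hmed : μ.real {x | g x ≤ a} = 1 / 2)
    (hpos : 0 < μ.real (g ⁻¹' Ioo (min a b) (max a b))) :
    ∫ x, |a - g x| ∂μ < ∫ x, |b - g x| ∂μ := by
  set s : α → ℝ := fun x => if g x ≤ a then 1 else -1
  have hs_eq : s = fun x => (2 : ℝ) * {x | g x ≤ a}.indicator (1 : α → ℝ) x - 1 := by
    funext x
    by_cases h : g x ≤ a <;> norm_num [s, h]
  have hmeas : MeasurableSet {x | g x ≤ a} := measurableSet_le hg measurable_const
  have hind_int : Integrable (fun x => (2 : ℝ) * {x | g x ≤ a}.indicator (1 : α → ℝ) x) μ :=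
    ((integrable_const (1 : ℝ)).indicator hmeas).const_mul 2
  have hs_int : Integrable s μ := by
    rw [hs_eq]
    exact hind_int.sub (integrable_const 1)
  have hs_zero : ∫ x, s x ∂μ = 0 := by
    rw [hs_eq, integral_sub hind_int (integrable_const 1), integral_const_mul,
      integral_indicator_one hmeas, hmed]
    simp
  have habs_int (c : ℝ) : Integrable (fun x => |c - g x|) μ :=
    ((integrable_const c).sub hgi).abs
  set d : α → ℝ := fun x => |b - g x| - |a - g x| - (b - a) * s x
  have hd_int : Integrable d μ := ((habs_int b).sub (habs_int a)).sub (hs_int.const_mul _)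
  have hd_pos : 0 < ∫ x, d x ∂μ := by
    have hd_nonneg : 0 ≤ d := fun x => sub_nonneg.2 (sub_mul_ite_le_abs_sub_sub_abs_sub a b (g x))
    rw [integral_pos_iff_support_of_nonneg hd_nonneg hd_int]
    refine (ENNReal.toReal_pos_iff.1 hpos).1.trans_le (measure_mono fun x hx => ?_)
    exact (sub_pos.2 (sub_mul_ite_lt_abs_sub_sub_abs_sub hx)).ne'
  have hsplit : ∫ x, |b - g x| ∂μ = ∫ x, |a - g x| ∂μ + ∫ x, d x ∂μ + (b - a) * ∫ x, s x ∂μ := by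
    rw [← integral_const_mul, ← integral_add (habs_int a) hd_int,
      ← integral_add (f := fun x => |a - g x| + d x) ((habs_int a).add hd_int) (hs_int.const_mul _)]
    congr 1 with x
    simp only [d]
    ring
  rw [hsplit, hs_zero]
  linarith

theorem StrictMonoOn.mem_Ioo_min_max {α β : Type*} [LinearOrder α] [LinearOrder β] {f : α → β}
    {s : Set α} (hf : StrictMonoOn f s) {a b x : α} (ha : a ∈ s) (hb : b ∈ s) (hx : x ∈ s)
    (h : x ∈ Ioo (min a b) (max a b)) : f x ∈ Ioo (min (f a) (f b)) (max (f a) (f b)) := by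
  rcases le_total a b with hab | hab
  · rw [min_eq_left hab, max_eq_right hab] at h
    rw [min_eq_left (hf.monotoneOn ha hb hab), max_eq_right (hf.monotoneOn ha hb hab)]
    exact ⟨hf ha hx h.1, hf hx hb h.2⟩
  · rw [min_eq_right hab, max_eq_left hab] at h
    rw [min_eq_right (hf.monotoneOn hb ha hab), max_eq_left (hf.monotoneOn hb ha hab)]
    exact ⟨hf hb hx h.1, hf hx ha h.2⟩

theorem exists_unique_setIntegral_Ioo_eq {f : ℝ → ℝ} (hf : Continuous f) {a b c : ℝ}
    (hpos : ∀ t ∈ Ioo a b, 0 < f t) (hc : c ∈ Ioo 0 (∫ t in Ioo a b, f t)) :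
    ∃! m, m ∈ Ioo a b ∧ ∫ t in Ioo a m, f t = c := by
  have hab : a ≤ b := by
    by_contra h
    simp [Ioo_eq_empty_of_le (not_le.1 h).le] at hc
  set G : ℝ → ℝ := fun x => ∫ t in a..x, f t
  have hG (x : ℝ) : HasDerivAt G (f x) x := (hf.integral_hasStrictDerivAt a x).hasDerivAt
  have hG_cont : Continuous G := continuous_iff_continuousAt.2 fun x => (hG x).continuousAt
  have hG_Ioo {x : ℝ} (hx : a ≤ x) : ∫ t in Ioo a x, f t = G x := by
    rw [show G x = ∫ t in a..x, f t from rfl, intervalIntegral.integral_of_le hx,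
      integral_Ioc_eq_integral_Ioo]
  have hG_mono : StrictMonoOn G (Icc a b) := by
    refine strictMonoOn_of_deriv_pos (convex_Icc a b) hG_cont.continuousOn fun x hx => ?_
    rw [interior_Icc] at hx
    rw [(hG x).deriv]
    exact hpos x hx
  obtain ⟨m, hm, hGm⟩ : c ∈ G '' Ioo a b := by
    refine intermediate_value_Ioo hab hG_cont.continuousOn ?_
    rwa [← hG_Ioo hab, show G a = 0 from intervalIntegral.integral_same]
  refine ⟨m, ⟨hm, by rw [hG_Ioo hm.1.le, hGm]⟩, fun m' ⟨hm', hGm'⟩ => ?_⟩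
  rw [hG_Ioo hm'.1.le, ← hGm] at hGm'
  exact hG_mono.injOn (Ioo_subset_Icc_self hm') (Ioo_subset_Icc_self hm) hGm'

lemma strictMonoOn_div_one_sub : StrictMonoOn (fun t : ℝ => t / (1 - t)) (Iio 1) := by
  intro a ha b hb hab
  rw [div_lt_div_iff₀ (sub_pos.2 ha) (sub_pos.2 hb)]
  nlinarith

lemma betaDen_pos {n i : ℕ} (hi : i ≤ n) {t : ℝ} (ht : t ∈ Ioo 0 1) : 0 < betaDen n i t := by
  have hchoose : (0 : ℝ) < n.choose i := by exact_mod_cast Nat.choose_pos hi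
  have h1t : 0 < 1 - t := sub_pos.2 ht.2
  have ht0 := ht.1
  unfold betaDen
  positivity

lemma continuous_betaDen (n i : ℕ) : Continuous (betaDen n i) := by
  unfold betaDen
  fun_prop

lemma betaPDFReal_eq_indicator_betaDen {n i : ℕ} (hi : i ≤ n) (t : ℝ) :
    betaPDFReal (i + 1) (n - i + 1) t = (Ioo 0 1).indicator (betaDen n i) t := by
  by_cases ht : t ∈ Ioo 0 1
  · rw [betaPDFReal, if_pos (show 0 < t ∧ t < 1 from ht), indicator_of_mem ht, betaDen,
      add_sub_cancel_right, add_sub_cancel_right, ← Nat.cast_sub hi, Real.rpow_natCast,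
      Real.rpow_natCast]
    have hfact := Nat.choose_mul_factorial_mul_factorial hi
    have hsum : (i : ℝ) + 1 + ((n - i : ℕ) + 1) = (n + 1 : ℕ) + 1 := by push_cast [hi]; ring
    rw [beta, hsum, Real.Gamma_nat_eq_factorial, Real.Gamma_nat_eq_factorial,
      Real.Gamma_nat_eq_factorial, Nat.factorial_succ, ← hfact]
    push_cast
    field_simp
  · rw [betaPDFReal, if_neg (show ¬(0 < t ∧ t < 1) from ht), indicator_of_notMem ht]

lemma isProbabilityMeasure_betaMeasure {n i : ℕ} (hi : i ≤ n) :
    IsProbabilityMeasure (betaMeasure (i + 1) (n - i + 1)) :=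
  isProbabilityMeasureBeta (by positivity) (by linarith [(Nat.cast_le (α := ℝ)).2 hi])

lemma measurable_betaPDF (α β : ℝ) : Measurable (betaPDF α β) :=
  (measurable_betaPDFReal α β).ennreal_ofReal

lemma toReal_betaPDF_smul_eq_indicator {n i : ℕ} (hi : i ≤ n) (F : ℝ → ℝ) (t : ℝ) :
    (betaPDF (i + 1) (n - i + 1) t).toReal • F t =
      (Ioo 0 1).indicator (fun t => F t * betaDen n i t) t := by
  rw [betaPDF, betaPDFReal_eq_indicator_betaDen hi]
  by_cases ht : t ∈ Ioo 0 1
  · rw [indicator_of_mem ht, indicator_of_mem ht, ENNReal.toReal_ofReal (betaDen_pos hi ht).le,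
      smul_eq_mul, mul_comm]
  · simp [indicator_of_notMem ht]

lemma integral_betaMeasure {n i : ℕ} (hi : i ≤ n) (F : ℝ → ℝ) :
    ∫ t, F t ∂betaMeasure (i + 1) (n - i + 1) = ∫ t in Ioo 0 1, F t * betaDen n i t := by
  rw [betaMeasure, integral_withDensity_eq_integral_toReal_smul
    (measurable_betaPDF _ _) (ae_of_all _ fun _ => ENNReal.ofReal_lt_top)]
  simp_rw [toReal_betaPDF_smul_eq_indicator hi]
  exact integral_indicator measurableSet_Ioo

lemma integrable_betaMeasure_iff {n i : ℕ} (hi : i ≤ n) {F : ℝ → ℝ} :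
    Integrable F (betaMeasure (i + 1) (n - i + 1)) ↔
      IntegrableOn (fun t => F t * betaDen n i t) (Ioo 0 1) := by
  rw [betaMeasure, integrable_withDensity_iff_integrable_smul'
    (measurable_betaPDF _ _) (ae_of_all _ fun _ => ENNReal.ofReal_lt_top)]
  simp_rw [toReal_betaPDF_smul_eq_indicator hi]
  exact integrable_indicator_iff measurableSet_Ioo

lemma measureReal_betaMeasure {n i : ℕ} (hi : i ≤ n) {s : Set ℝ} (hs : MeasurableSet s) :
    (betaMeasure (i + 1) (n - i + 1)).real s = ∫ t in Ioo 0 1 ∩ s, betaDen n i t := by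
  rw [← integral_indicator_one hs, integral_betaMeasure hi, ← setIntegral_indicator hs]
  congr 1 with t
  by_cases ht : t ∈ s <;> simp [ht]

lemma integral_betaDen_Ioo_zero_one {n i : ℕ} (hi : i ≤ n) :
    ∫ t in Ioo 0 1, betaDen n i t = 1 := by
  have := isProbabilityMeasure_betaMeasure hi
  simpa using (measureReal_betaMeasure hi MeasurableSet.univ).symm

lemma integral_betaDen_Ioo_pos {n i : ℕ} (hi : i ≤ n) {l r : ℝ} (hl : 0 ≤ l) (hlr : l < r)
    (hr : r ≤ 1) : 0 < ∫ t in Ioo l r, betaDen n i t := by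
  rw [← integral_Ioc_eq_integral_Ioo, ← intervalIntegral.integral_of_le hlr.le]
  exact intervalIntegral.intervalIntegral_pos_of_pos_on
    ((continuous_betaDen n i).intervalIntegrable l r)
    (fun t ht => betaDen_pos hi ⟨hl.trans_lt ht.1, ht.2.trans_le hr⟩) hlr

lemma integrableOn_div_one_sub_mul_betaDen {n i : ℕ} (hi : i < n) :
    IntegrableOn (fun t : ℝ => t / (1 - t) * betaDen n i t) (Ioo 0 1) := by
  have hcont : Continuous fun t : ℝ =>
      ((n : ℝ) + 1) * n.choose i * t ^ (i + 1) * (1 - t) ^ (n - i - 1) := by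
    fun_prop
  refine (hcont.integrableOn_Icc.mono_set Ioo_subset_Icc_self).congr_fun
    (fun t ht => ?_) measurableSet_Ioo
  have h1t : 1 - t ≠ 0 := (sub_pos.2 ht.2).ne'
  obtain ⟨k, hk⟩ : ∃ k, n - i = k + 1 := ⟨n - i - 1, by omega⟩
  rw [betaDen, hk, Nat.add_sub_cancel]
  field_simp
  ring

theorem integral_abs_sub_div_one_sub_mul_betaDen_lt {n i : ℕ} (hi : i < n) {m u : ℝ}
    (hm : m ∈ Ioo 0 1) (hmed : ∫ t in Ioo 0 m, betaDen n i t = 1 / 2) (hu : u ∈ Ioo 0 1)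
    (hne : u ≠ m) :
    ∫ t in Ioo 0 1, |m / (1 - m) - t / (1 - t)| * betaDen n i t <
      ∫ t in Ioo 0 1, |u / (1 - u) - t / (1 - t)| * betaDen n i t := by
  have := isProbabilityMeasure_betaMeasure hi.le
  have hodds_meas : Measurable fun t : ℝ => t / (1 - t) := by fun_prop
  rw [← integral_betaMeasure hi.le, ← integral_betaMeasure hi.le]
  refine integral_abs_sub_lt_of_median hodds_meas
    ((integrable_betaMeasure_iff hi.le).2 (integrableOn_div_one_sub_mul_betaDen hi)) ?_ ?_
  · have hset : Ioo 0 1 ∩ {t : ℝ | t / (1 - t) ≤ m / (1 - m)} = Ioc 0 m := by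
      ext t
      refine ⟨fun ⟨ht, htm⟩ => ⟨ht.1, ?_⟩, fun ht => ⟨⟨ht.1, ht.2.trans_lt hm.2⟩, ?_⟩⟩
      · exact (strictMonoOn_div_one_sub.le_iff_le ht.2 hm.2).1 htm
      · exact strictMonoOn_div_one_sub.monotoneOn (ht.2.trans_lt hm.2) hm.2 ht.2
    rw [measureReal_betaMeasure hi.le (measurableSet_le hodds_meas measurable_const), hset,
      integral_Ioc_eq_integral_Ioo, hmed]
  · have hsub : Ioo (min m u) (max m u) ⊆
        (fun t : ℝ => t / (1 - t)) ⁻¹' Ioo (min (m / (1 - m)) (u / (1 - u)))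
          (max (m / (1 - m)) (u / (1 - u))) := fun t ht =>
      strictMonoOn_div_one_sub.mem_Ioo_min_max hm.2 hu.2 (ht.2.trans (max_lt hm.2 hu.2)) ht
    refine lt_of_lt_of_le ?_ (measureReal_mono hsub)
    rw [measureReal_betaMeasure hi.le measurableSet_Ioo,
      inter_eq_right.2 (Ioo_subset_Ioo (le_min hm.1.le hu.1.le) (max_le hm.2.le hu.2.le))]
    exact integral_betaDen_Ioo_pos hi.le (le_min hm.1.le hu.1.le)
      (min_lt_max.2 hne.symm) (max_le hm.2.le hu.2.le)

theorem odds_ratio_constrained_median_general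
    {n : ℕ} (hn : 2 ≤ n) (i : ℕ) (hi2 : i ≤ n - 1) :
    IntegrableOn (fun t : ℝ => t / (1 - t) * betaDen n i t) (Set.Ioo 0 1) volume ∧
    (∃! m : ℝ, m ∈ Set.Ioo (0 : ℝ) 1 ∧
      (∫ t in Set.Ioo (0 : ℝ) m, betaDen n i t) = 1 / 2) ∧
    (∀ m : ℝ, m ∈ Set.Ioo (0 : ℝ) 1 →
      (∫ t in Set.Ioo (0 : ℝ) m, betaDen n i t) = 1 / 2 →
      ∀ u ∈ Set.Ioo (0 : ℝ) 1, u ≠ m →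
        (∫ t in Set.Ioo (0 : ℝ) 1, |m / (1 - m) - t / (1 - t)| * betaDen n i t) <
          ∫ t in Set.Ioo (0 : ℝ) 1, |u / (1 - u) - t / (1 - t)| * betaDen n i t) := by
  have hi : i < n := by omega
  refine ⟨integrableOn_div_one_sub_mul_betaDen hi, ?_,
    fun m hm hmed u hu hne => integral_abs_sub_div_one_sub_mul_betaDen_lt hi hm hmed hu hne⟩
  refine exists_unique_setIntegral_Ioo_eq (continuous_betaDen n i)
    (fun t ht => betaDen_pos hi.le ht) ?_
  rw [integral_betaDen_Ioo_zero_one hi.le]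
  norm_num

/-- for `1 ≤ i ≤ n−1`, `t ↦ t/(1−t)` is integrable against the
`Beta(i+1, n−i+1)` density on `(0,1)`, and
`u ↦ ∫₀¹ |u/(1−u) − t/(1−t)|·f_{T_i}(t) dt` attains its minimum on `(0,1)`
uniquely at the median of the `Beta(i+1, n−i+1)` distribution. -/
theorem odds_ratio_constrained_median
    {n : ℕ} (hn : 2 ≤ n) (i : ℕ) (hi1 : 1 ≤ i) (hi2 : i ≤ n - 1) :
    IntegrableOn (fun t : ℝ => t / (1 - t) * betaDen n i t) (Set.Ioo 0 1) volume ∧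
    (∃! m : ℝ, m ∈ Set.Ioo (0 : ℝ) 1 ∧
      (∫ t in Set.Ioo (0 : ℝ) m, betaDen n i t) = 1 / 2) ∧
    (∀ m : ℝ, m ∈ Set.Ioo (0 : ℝ) 1 →
      (∫ t in Set.Ioo (0 : ℝ) m, betaDen n i t) = 1 / 2 →
      ∀ u ∈ Set.Ioo (0 : ℝ) 1, u ≠ m →
        (∫ t in Set.Ioo (0 : ℝ) 1, |m / (1 - m) - t / (1 - t)| * betaDen n i t) <
          ∫ t in Set.Ioo (0 : ℝ) 1, |u / (1 - u) - t / (1 - t)| * betaDen n i t) :=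
  odds_ratio_constrained_median_general hn i hi2

end
end
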